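/- arXiv:1006.5149 — 4 statements merged into one kernel-verified Lean document; each statement's English description precedes it below -/
import Mathlib

section
/- Let Ω ⊆ ℝ³ be an open set with coordinates (x,y,z), let Λ be a nonzero real constant, and let u : Ω → ℝ be a C³ function satisfying the SU(∞) Toda equation u_xx + u_yy + (e^u)_zz = 0 on Ω. Define V : Ω → ℝ by −4ΛV = z·u_z − 2, i.e. V = (2 − z·u_z)/(4Λ). Then V satisfies the linearised SU(∞) Toda equation V_xx + V_yy + (V·e^u)_zz = 0 on Ω. -/
/-!
Write `V = c (2 - z u_z)` with `c = (4Λ)⁻¹`. A horizontal derivative does not see the weight `z`,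
so `V_xx = -c z u_zxx` and `V_yy = -c z u_zyy`. Since `V e^u = c (2 e^u - z (e^u)_z)`, two
`z`-derivatives of the weighted term produce `2 (e^u)_zz + z (e^u)_zzz`, whose first part cancels,
so `(V e^u)_zz = -c z (e^u)_zzz`. Because third partial derivatives of a `C³` function commute, the
linearised Toda expression is `-c z ∂_z (u_xx + u_yy + (e^u)_zz)`, and this vanishes because the
Toda equation holds on a neighbourhood of the point.
-/

/-- Partial derivative in the `x` direction of a function on `ℝ × ℝ × ℝ`. -/
noncomputable def pdx (f : ℝ × ℝ × ℝ → ℝ) (p : ℝ × ℝ × ℝ) : ℝ :=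
  fderiv ℝ f p (1, 0, 0)

/-- Partial derivative in the `y` direction of a function on `ℝ × ℝ × ℝ`. -/
noncomputable def pdy (f : ℝ × ℝ × ℝ → ℝ) (p : ℝ × ℝ × ℝ) : ℝ :=
  fderiv ℝ f p (0, 1, 0)

/-- Partial derivative in the `z` direction of a function on `ℝ × ℝ × ℝ`. -/
noncomputable def pdz (f : ℝ × ℝ × ℝ → ℝ) (p : ℝ × ℝ × ℝ) : ℝ :=
  fderiv ℝ f p (0, 0, 1)

open Filter Topology

section

variable {E F : Type*} [NormedAddCommGroup E] [NormedSpace ℝ E]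
  [NormedAddCommGroup F] [NormedSpace ℝ F] {f : E → F} {p : E}

theorem fderiv_const_mul_apply (c : ℝ) (g : E → ℝ) (q v : E) :
    fderiv ℝ (fun r => c * g r) q v = c * fderiv ℝ g q v := by
  change fderiv ℝ (c • g) q v = _
  simp [fderiv_const_smul_field]

theorem fderiv_add_add_apply_eq_zero {g k l : E → ℝ} (hg : DifferentiableAt ℝ g p)
    (hk : DifferentiableAt ℝ k p) (hl : DifferentiableAt ℝ l p)
    (hsum : (fun q => g q + k q + l q) =ᶠ[𝓝 p] 0) (w : E) :
    fderiv ℝ g p w + fderiv ℝ k p w + fderiv ℝ l p w = 0 := by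
  have h : fderiv ℝ (fun q => g q + k q + l q) p w = 0 := by simp [hsum.fderiv_eq]
  rwa [fderiv_fun_add (f := fun q => g q + k q) (hg.add hk) hl, fderiv_fun_add hg hk] at h

theorem ContDiffAt.contDiffAt_fderiv_apply {m n : WithTop ℕ∞} (hf : ContDiffAt ℝ n f p)
    (hmn : m + 1 ≤ n) (v : E) : ContDiffAt ℝ m (fderiv ℝ f · v) p :=
  (hf.fderiv_right hmn).clm_apply contDiffAt_const

theorem ContDiffAt.differentiableAt_fderiv_fderiv_apply (hf : ContDiffAt ℝ 3 f p) (v w : E) :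
    DifferentiableAt ℝ (fderiv ℝ (fderiv ℝ f · v) · w) p :=
  ((hf.contDiffAt_fderiv_apply (m := 2) (by norm_num) v).contDiffAt_fderiv_apply (m := 1)
    le_rfl w).differentiableAt one_ne_zero

theorem fderiv_fderiv_apply (hf : DifferentiableAt ℝ (fderiv ℝ f) p) (v w : E) :
    fderiv ℝ (fderiv ℝ f · v) p w = fderiv ℝ (fderiv ℝ f) p w v := by
  rw [fderiv_clm_apply hf (differentiableAt_const v)]
  simp

theorem ContDiffAt.fderiv_fderiv_apply_comm (hf : ContDiffAt ℝ 2 f p) (v w : E) :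
    fderiv ℝ (fderiv ℝ f · v) p w = fderiv ℝ (fderiv ℝ f · w) p v := by
  have hf' : DifferentiableAt ℝ (fderiv ℝ f) p :=
    (hf.fderiv_right (m := 1) le_rfl).differentiableAt one_ne_zero
  rw [fderiv_fderiv_apply hf', fderiv_fderiv_apply hf', hf.isSymmSndFDerivAt (by simp) w v]

theorem ContDiffAt.fderiv_fderiv_fderiv_apply_comm (hf : ContDiffAt ℝ 3 f p) (v w : E) :
    fderiv ℝ (fderiv ℝ (fderiv ℝ f · w) · v) p v
      = fderiv ℝ (fderiv ℝ (fderiv ℝ f · v) · v) p w := by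
  have hswap : (fderiv ℝ (fderiv ℝ f · w) · v) =ᶠ[𝓝 p] (fderiv ℝ (fderiv ℝ f · v) · w) := by
    filter_upwards [hf.eventually (by simp)] with q hq
    exact (hq.of_le (by norm_num)).fderiv_fderiv_apply_comm w v
  rw [hswap.fderiv_eq]
  exact (hf.contDiffAt_fderiv_apply (m := 2) (by norm_num) v).fderiv_fderiv_apply_comm w v

end

section

variable {a h : ℝ × ℝ × ℝ → ℝ} {p : ℝ × ℝ × ℝ}

theorem fderiv_sub_zmul_apply (ha : DifferentiableAt ℝ a p) (hh : DifferentiableAt ℝ h p)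
    (v : ℝ × ℝ × ℝ) :
    fderiv ℝ (fun q => a q - q.2.2 * h q) p v
      = fderiv ℝ a p v - (v.2.2 * h p + p.2.2 * fderiv ℝ h p v) := by
  have hz : HasFDerivAt (fun q : ℝ × ℝ × ℝ => q.2.2) _ p :=
    (hasFDerivAt_snd (𝕜 := ℝ) (p := p)).snd
  rw [fderiv_fun_sub (g := fun q => q.2.2 * h q) ha (hz.differentiableAt.mul hh),
    fderiv_fun_mul hz.differentiableAt hh, hz.fderiv]
  simp
  ring

theorem ContDiffAt.fderiv_fderiv_sub_zmul_apply (ha : ContDiffAt ℝ 2 a p)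
    (hh : ContDiffAt ℝ 2 h p) (v : ℝ × ℝ × ℝ) :
    fderiv ℝ (fderiv ℝ (fun q => a q - q.2.2 * h q) · v) p v
      = fderiv ℝ (fderiv ℝ a · v) p v - 2 * v.2.2 * fderiv ℝ h p v
        - p.2.2 * fderiv ℝ (fderiv ℝ h · v) p v := by
  have hfirst : (fderiv ℝ (fun q => a q - q.2.2 * h q) · v)
      =ᶠ[𝓝 p] fun q => (fderiv ℝ a q v - v.2.2 * h q) - q.2.2 * fderiv ℝ h q v := by
    filter_upwards [ha.eventually (by simp), hh.eventually (by simp)] with q hqa hqh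
    rw [fderiv_sub_zmul_apply (hqa.differentiableAt two_ne_zero)
      (hqh.differentiableAt two_ne_zero)]
    ring
  have hav : DifferentiableAt ℝ (fderiv ℝ a · v) p :=
    (ha.contDiffAt_fderiv_apply (m := 1) le_rfl v).differentiableAt one_ne_zero
  have hhv : DifferentiableAt ℝ (fderiv ℝ h · v) p :=
    (hh.contDiffAt_fderiv_apply (m := 1) le_rfl v).differentiableAt one_ne_zero
  have hh' : DifferentiableAt ℝ h p := hh.differentiableAt two_ne_zero
  rw [hfirst.fderiv_eq, fderiv_sub_zmul_apply (a := fun q => fderiv ℝ a q v - v.2.2 * h q)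
      (hav.sub (hh'.const_mul _)) hhv,
    fderiv_fun_sub (g := fun q => v.2.2 * h q) hav (hh'.const_mul _)]
  simp only [sub_apply, fderiv_const_mul_apply]
  ring

end

noncomputable def todaPotential (c : ℝ) (u : ℝ × ℝ × ℝ → ℝ) (q : ℝ × ℝ × ℝ) : ℝ :=
  c * (2 - q.2.2 * pdz u q)

section

variable {u : ℝ × ℝ × ℝ → ℝ} {p : ℝ × ℝ × ℝ}

theorem ContDiffAt.fderiv_fderiv_todaPotential_of_horizontal (hu : ContDiffAt ℝ 3 u p)
    (c : ℝ) {v : ℝ × ℝ × ℝ} (hv : v.2.2 = 0) :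
    fderiv ℝ (fderiv ℝ (todaPotential c u) · v) p v
      = -(c * (p.2.2 * fderiv ℝ (fderiv ℝ (pdz u) · v) p v)) := by
  unfold todaPotential
  simp only [fderiv_const_mul_apply]
  rw [contDiffAt_const.fderiv_fderiv_sub_zmul_apply (h := pdz u)
    (hu.contDiffAt_fderiv_apply (m := 2) (by norm_num) _)]
  simp [hv]

theorem ContDiffAt.pdz_pdz_todaPotential_mul_exp (hu : ContDiffAt ℝ 3 u p) (c : ℝ) :
    pdz (pdz (fun q => todaPotential c u q * Real.exp (u q))) p
      = -(c * (p.2.2 * pdz (pdz (pdz (fun q => Real.exp (u q)))) p)) := by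
  set F := fun q => Real.exp (u q) with hF_def
  have hF : ContDiffAt ℝ 3 F p := hu.exp
  have hVF : (fun q => todaPotential c u q * F q)
      =ᶠ[𝓝 p] fun q => c * (2 * F q - q.2.2 * pdz F q) := by
    filter_upwards [hu.eventually (by simp)] with q hq
    simp only [todaPotential, pdz, hF_def]
    rw [fderiv_exp (hq.differentiableAt (by simp))]
    simp
    ring
  have hVF_z : (fderiv ℝ (fun q => todaPotential c u q * F q) · (0, 0, 1))
      =ᶠ[𝓝 p] (fderiv ℝ (fun q => c * (2 * F q - q.2.2 * pdz F q)) · (0, 0, 1)) :=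
    (hVF.fderiv (𝕜 := ℝ)).mono fun q hq => by simp only [hq]
  change fderiv ℝ (fderiv ℝ (fun q => todaPotential c u q * F q) · (0, 0, 1)) p (0, 0, 1) = _
  rw [hVF_z.fderiv_eq]
  simp only [fderiv_const_mul_apply]
  rw [ContDiffAt.fderiv_fderiv_sub_zmul_apply (h := pdz F)
    (contDiffAt_const.mul (hF.of_le (by norm_num)))
    (hF.contDiffAt_fderiv_apply (m := 2) (by norm_num) _)]
  simp only [fderiv_const_mul_apply]
  unfold pdz
  ring

theorem ContDiffAt.pdz_toda_eq_zero (hu : ContDiffAt ℝ 3 u p)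
    (htoda : ∀ᶠ q in 𝓝 p,
      pdx (pdx u) q + pdy (pdy u) q + pdz (pdz (fun r => Real.exp (u r))) q = 0) :
    pdz (pdx (pdx u)) p + pdz (pdy (pdy u)) p + pdz (pdz (pdz (fun r => Real.exp (u r)))) p
      = 0 :=
  fderiv_add_add_apply_eq_zero (hu.differentiableAt_fderiv_fderiv_apply _ _)
    (hu.differentiableAt_fderiv_fderiv_apply _ _)
    (hu.exp.differentiableAt_fderiv_fderiv_apply _ _) htoda _

end

theorem linearised_toda_from_toda_general
    (Ω : Set (ℝ × ℝ × ℝ)) (hΩ : IsOpen Ω)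
    (Λ : ℝ)
    (u : ℝ × ℝ × ℝ → ℝ) (hu : ContDiffOn ℝ 3 u Ω)
    (htoda : ∀ p ∈ Ω,
      pdx (pdx u) p + pdy (pdy u) p
        + pdz (pdz (fun q => Real.exp (u q))) p = 0)
    (V : ℝ × ℝ × ℝ → ℝ)
    (hV : ∀ p : ℝ × ℝ × ℝ, V p = (2 - p.2.2 * pdz u p) / (4 * Λ)) :
    ∀ p ∈ Ω,
      pdx (pdx V) p + pdy (pdy V) p
        + pdz (pdz (fun q => V q * Real.exp (u q))) p = 0 := by
  intro p hp
  have hΩp : Ω ∈ 𝓝 p := hΩ.mem_nhds hp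
  have hup : ContDiffAt ℝ 3 u p := hu.contDiffAt hΩp
  obtain rfl : V = todaPotential (4 * Λ)⁻¹ u :=
    funext fun q => by rw [hV, todaPotential, div_eq_inv_mul]
  have hVxx := hup.fderiv_fderiv_todaPotential_of_horizontal (4 * Λ)⁻¹ (v := (1, 0, 0)) rfl
  have hVyy := hup.fderiv_fderiv_todaPotential_of_horizontal (4 * Λ)⁻¹ (v := (0, 1, 0)) rfl
  have hswap_x := hup.fderiv_fderiv_fderiv_apply_comm (1, 0, 0) (0, 0, 1)
  have hswap_y := hup.fderiv_fderiv_fderiv_apply_comm (0, 1, 0) (0, 0, 1)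
  have htoda_z := hup.pdz_toda_eq_zero (eventually_of_mem hΩp htoda)
  rw [hup.pdz_pdz_todaPotential_mul_exp]
  unfold pdx pdy pdz at *
  rw [hVxx, hVyy, hswap_x, hswap_y]
  linear_combination (-((4 * Λ)⁻¹ * p.2.2)) * htoda_z

/-- If `u` is a `C³` solution of the `SU(∞)` Toda equation
`u_xx + u_yy + (e^u)_zz = 0` on an open set `Ω ⊆ ℝ³`, and `V` is defined by
`−4ΛV = z·u_z − 2` (with `Λ ≠ 0`), then `V` satisfies the linearised Toda
equation `V_xx + V_yy + (V·e^u)_zz = 0` on `Ω`. -/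
theorem linearised_toda_from_toda
    (Ω : Set (ℝ × ℝ × ℝ)) (hΩ : IsOpen Ω)
    (Λ : ℝ) (hΛ : Λ ≠ 0)
    (u : ℝ × ℝ × ℝ → ℝ) (hu : ContDiffOn ℝ 3 u Ω)
    (htoda : ∀ p ∈ Ω,
      pdx (pdx u) p + pdy (pdy u) p
        + pdz (pdz (fun q => Real.exp (u q))) p = 0)
    (V : ℝ × ℝ × ℝ → ℝ)
    (hV : ∀ p : ℝ × ℝ × ℝ, V p = (2 - p.2.2 * pdz u p) / (4 * Λ)) :
    ∀ p ∈ Ω,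
      pdx (pdx V) p + pdy (pdy V) p
        + pdz (pdz (fun q => V q * Real.exp (u q))) p = 0 :=
  linearised_toda_from_toda_general Ω hΩ Λ u hu htoda V hV
end

section
/- Let Λ > 0. A differentiable function U : ℝ → ℝ with U(τ) > 0 for all τ ∈ ℝ satisfies the ordinary differential equation d/dτ (U(τ)^{−1}) = 2·U(τ)^{−1}·(Λ·U(τ)^{−1} − 1) for all τ ∈ ℝ if and only if there exists a constant c ≥ 0 such that U(τ) = Λ·(1 + c²·e^{2τ}) for all τ ∈ ℝ. -/
/-!
Since `(U⁻¹)' = -U'/U²`, the equation for `U⁻¹` is the linear equation `U' = 2 (U - Λ)`,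
whose solutions are `U = Λ + k e^{2τ}`. If `k < 0` then `U` becomes negative for large `τ`,
so positivity forces `k ≥ 0`, and `k = Λ c²` with `c = √(k / Λ)`.
-/

open Real

theorem deriv_inv_eq_iff_deriv_eq {U : ℝ → ℝ} {τ a Λ : ℝ} (hU : DifferentiableAt ℝ U τ)
    (hτ : U τ ≠ 0) :
    deriv (fun t => (U t)⁻¹) τ = a * (U τ)⁻¹ * (Λ * (U τ)⁻¹ - 1) ↔
      deriv U τ = a * (U τ - Λ) := by
  rw [show (fun t => (U t)⁻¹) = U⁻¹ from rfl, deriv_inv'' hU hτ]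
  constructor <;> intro h
  · field_simp at h
    linear_combination -h
  · field_simp
    linear_combination -h

theorem eq_add_mul_exp_of_hasDerivAt {f : ℝ → ℝ} {a b : ℝ}
    (hf : ∀ t, HasDerivAt f (a * (f t - b)) t) (t : ℝ) :
    f t = b + (f 0 - b) * exp (a * t) := by
  have hg : ∀ s, HasDerivAt (fun s => (f s - b) * exp (-(a * s))) 0 s := fun s => by
    have hexp : HasDerivAt (fun s => exp (-(a * s))) (exp (-(a * s)) * -a) s := by
      simpa using ((hasDerivAt_id s).const_mul a).neg.exp
    exact (((hf s).sub_const b).mul hexp).congr_deriv (by ring)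
  have hconst := is_const_of_deriv_eq_zero (fun s => (hg s).differentiableAt)
    (fun s => (hg s).deriv) t 0
  simp only [mul_zero, neg_zero, exp_zero, mul_one] at hconst
  rw [← hconst, mul_assoc, ← exp_add]
  simp

theorem nonneg_of_forall_pos_add_mul_exp {b k : ℝ} (hpos : ∀ t, 0 < b + k * exp t) : 0 ≤ k := by
  by_contra! hk
  have := hpos (log ((|b| + 1) / -k))
  rw [exp_log (div_pos (by positivity) (neg_pos.mpr hk)), mul_div_assoc', div_neg,
    mul_div_cancel_left₀ _ hk.ne] at this
  linarith [le_abs_self b]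

/-- For `Λ > 0`, a positive differentiable function `U : ℝ → ℝ` satisfies
`d/dτ (U⁻¹) = 2·U⁻¹·(Λ·U⁻¹ − 1)` on all of `ℝ` if and only if
`U(τ) = Λ·(1 + c²·e^{2τ})` for some constant `c ≥ 0`. -/
theorem ode_solution_theta_zero
    (Λ : ℝ) (hΛ : 0 < Λ)
    (U : ℝ → ℝ) (hU : Differentiable ℝ U) (hUpos : ∀ τ, 0 < U τ) :
    (∀ τ : ℝ, deriv (fun t => (U t)⁻¹) τ = 2 * (U τ)⁻¹ * (Λ * (U τ)⁻¹ - 1)) ↔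
      ∃ c : ℝ, 0 ≤ c ∧ ∀ τ : ℝ, U τ = Λ * (1 + c ^ 2 * Real.exp (2 * τ)) := by
  simp only [deriv_inv_eq_iff_deriv_eq (hU _) (hUpos _).ne']
  constructor
  · intro hlin
    have hUeq := eq_add_mul_exp_of_hasDerivAt fun τ => hlin τ ▸ (hU τ).hasDerivAt
    have hk : 0 ≤ U 0 - Λ := nonneg_of_forall_pos_add_mul_exp fun t => by
      have := hUpos (t / 2)
      rwa [hUeq, mul_div_cancel₀ t two_ne_zero] at this
    refine ⟨√((U 0 - Λ) / Λ), sqrt_nonneg _, fun τ => ?_⟩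
    rw [sq_sqrt (div_nonneg hk hΛ.le), hUeq]
    field_simp
  · rintro ⟨c, -, hUeq⟩ τ
    have hderiv : HasDerivAt (fun t => Λ * (1 + c ^ 2 * exp (2 * t)))
        (Λ * (c ^ 2 * (exp (2 * τ) * 2))) τ :=
      ((((hasDerivAt_id τ).const_mul 2).exp.const_mul _).const_add 1).const_mul Λ
        |>.congr_deriv (by rw [id]; ring)
    rw [funext hUeq, hderiv.deriv]
    ring
end

section
/- Let m ∈ ℝ and l ∈ ℝ with l ≠ 0. For (s,r) ∈ ℝ² with r ≠ 0, define R = e^{−s/l}, T = l·(r−m)·e^{s/l}, and V(r) = r²/l² + (1 − m/r)². Then: (i) m/R + T/l = r·e^{s/l}; (ii) V(r) > 0; and (iii) for all (a,b) ∈ ℝ², writing dR(a,b) = −(1/l)·e^{−s/l}·a and dT(a,b) = (r−m)·e^{s/l}·a + l·e^{s/l}·b for the differentials of R and T applied to the tangent vector (a,b), one has (r·e^{s/l})²·(dR(a,b))² + (r·e^{s/l})^{−2}·(dT(a,b))² = V(r)·(a + (l·(r−m)/(V(r)·r²))·b)² + V(r)^{−1}·b². That is, the coordinate change (s,r) ↦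 (R,T) transforms the (R,T)-block (m/R + T/l)²·dR² + (m/R + T/l)^{−2}·dT² of the Euclidean Kastor–Traschen metric with 𝒰 = m/R into the static form V·dψ² + V^{−1}·dr², where dψ = ds + (l·(r−m)/(V·r²))·dr. -/
/-!
Everything is algebra once `e^{-s/l} = (e^{s/l})⁻¹` is used. The `(R,T)`-block is invariant under
the scaling `R ↦ λ⁻¹R`, `T ↦ λT` generated by the Killing vector, so the factors `e^{±s/l}` cancel
and the block becomes `(r/l)² ds² + ((r-m) ds + l dr)²/r²`. Completing the square in `ds` yields
`V dψ² + V⁻¹ dr²`, because the leftover coefficient of `dr²` is `(l²(r-m)²/r⁴ + 1)/V = l²/r²`,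
i.e. `V·l²/r² = 1 + l²(r-m)²/r⁴`.
-/

open Real

theorem exp_neg_div_eq_inv (s l : ℝ) : exp (-s / l) = (exp (s / l))⁻¹ := by
  rw [neg_div, exp_neg]

theorem mul_add_div_mul_sq_add_inv_mul_sq {V : ℝ} (hV : V ≠ 0) (a b c : ℝ) :
    V * (a + c / V * b) ^ 2 + V⁻¹ * b ^ 2
      = V * a ^ 2 + 2 * c * a * b + (c ^ 2 + 1) / V * b ^ 2 := by
  field_simp
  ring

namespace KastorTraschen

noncomputable def potential (m l r : ℝ) : ℝ := r ^ 2 / l ^ 2 + (1 - m / r) ^ 2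

variable {m l r : ℝ}

theorem potential_pos (hl : l ≠ 0) (hr : r ≠ 0) : 0 < potential m l r := by
  unfold potential
  positivity

theorem sq_add_one_div_potential (hl : l ≠ 0) (hr : r ≠ 0) :
    ((l * (r - m) / r ^ 2) ^ 2 + 1) / potential m l r = l ^ 2 / r ^ 2 := by
  rw [div_eq_iff (potential_pos hl hr).ne', potential]
  field_simp
  ring

theorem block_scale_invariant {E : ℝ} (hE : E ≠ 0) (m l r a b : ℝ) :
    (r * E) ^ 2 * (-(1 / l) * E⁻¹ * a) ^ 2 + ((r * E) ^ 2)⁻¹ * ((r - m) * E * a + l * E * b) ^ 2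
      = r ^ 2 / l ^ 2 * a ^ 2 + ((r - m) * a + l * b) ^ 2 / r ^ 2 := by
  field_simp

theorem block_eq_static_form (hl : l ≠ 0) (hr : r ≠ 0) (a b : ℝ) :
    r ^ 2 / l ^ 2 * a ^ 2 + ((r - m) * a + l * b) ^ 2 / r ^ 2
      = potential m l r * (a + l * (r - m) / (potential m l r * r ^ 2) * b) ^ 2
        + (potential m l r)⁻¹ * b ^ 2 := by
  rw [div_mul_eq_div_div_swap, mul_add_div_mul_sq_add_inv_mul_sq (potential_pos hl hr).ne',
    sq_add_one_div_potential hl hr, potential]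
  field_simp
  ring

end KastorTraschen

open KastorTraschen in
/-- The coordinate change `R = e^{−s/l}`, `T = l(r−m)e^{s/l}` puts the
`(R,T)`-block of the Euclidean Kastor–Traschen metric with `𝒰 = m/R` into the
static form `V dψ² + V⁻¹ dr²`, where `V(r) = r²/l² + (1 − m/r)²` and
`dψ = ds + (l(r−m)/(Vr²)) dr`. -/
theorem kastor_traschen_static_form
    (m l : ℝ) (hl : l ≠ 0) (s r : ℝ) (hr : r ≠ 0)
    (R T V : ℝ)
    (hR : R = Real.exp (-s / l))
    (hT : T = l * (r - m) * Real.exp (s / l))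
    (hV : V = r ^ 2 / l ^ 2 + (1 - m / r) ^ 2) :
    (m / R + T / l = r * Real.exp (s / l)) ∧
    (0 < V) ∧
    (∀ a b : ℝ,
      (r * Real.exp (s / l)) ^ 2 * (-(1 / l) * Real.exp (-s / l) * a) ^ 2
        + ((r * Real.exp (s / l)) ^ 2)⁻¹
          * ((r - m) * Real.exp (s / l) * a + l * Real.exp (s / l) * b) ^ 2
      = V * (a + (l * (r - m) / (V * r ^ 2)) * b) ^ 2 + V⁻¹ * b ^ 2) := by
  subst hR hT hV
  refine ⟨?_, potential_pos hl hr, fun a b => ?_⟩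
  · rw [exp_neg_div_eq_inv]
    field_simp
    ring
  · rw [exp_neg_div_eq_inv, block_scale_invariant (exp_ne_zero _)]
    exact block_eq_static_form hl hr a b
end

section
/- Let Ω ⊆ ℝ³ be open, φ : Ω → ℝ a C¹ function, and l ∈ ℝ with l ≠ 0. Define T : Ω × ℝ → ℝ by T(x,τ) = l·φ(x)/√2 − l·e^{−√2·τ/l} and 𝒰 : Ω → ℝ by 𝒰(x) = −φ(x)/√2. Then: (i) 𝒰(x) + T(x,τ)/l = −e^{−√2·τ/l} for all (x,τ); and (ii) for every point (x,τ) ∈ Ω × ℝ and every tangent vector (v,t) ∈ ℝ³ × ℝ, writing dT(v,t) = (l/√2)·Dφ_x(v) + √2·e^{−√2·τ/l}·t for the differential of T, one has (𝒰(x) + T(x,τ)/l)²·|v|² + (𝒰(x) + T(x,τ)/l)^{−2}·(dT(v,t))² = e^{−2√2·τ/l}·|v|² + 2·(t + (l/2)·e^{√2·τ/l}·Dφ_x(v))². That is, the pullback of the Kastor–Traschen metric (𝒰 + T/l)²(dx² + dy² + dz²) + (𝒰 + T/l)^{−2}dT² under the map (x,τ) ↦ (x, T(x,τ)) equals the metric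 e^{−2√2·τ/l}(dx² + dy² + dz²) + 2(dτ + (l/2)e^{√2·τ/l}dφ)². -/
open Real

/- The conformal factor `𝒰 + T/l` collapses to `-e^{-√2τ/l}`, whose square is `e^{-2√2τ/l}`;
dividing `dT = √2 e^{-√2τ/l} (dτ + (l/2) e^{√2τ/l} dφ)` by it leaves `√2 (dτ + (l/2) e^{√2τ/l} dφ)`.
So the identity is pointwise algebra, with `Dφ_x(v)` entering only as a real number. -/

lemma neg_div_sqrt_two_add_div_eq {l : ℝ} (hl : l ≠ 0) (a E : ℝ) :
    -a / √2 + (l * a / √2 - l * E) / l = -E := by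
  field_simp
  ring

lemma inv_sq_mul_sq_eq_two_mul_sq {E : ℝ} (hE : E ≠ 0) (l d t : ℝ) :
    (E ^ 2)⁻¹ * (l / √2 * d + √2 * E * t) ^ 2 = 2 * (t + l / 2 * E⁻¹ * d) ^ 2 := by
  have factored : l / √2 * d + √2 * E * t = √2 * E * (t + l / 2 * E⁻¹ * d) := by
    field_simp
    rw [sq_sqrt zero_le_two]
    ring
  rw [factored, mul_pow, mul_pow, sq_sqrt zero_le_two]
  field_simp

theorem kastor_traschen_coordinate_change_general
    (Ω : Set (EuclideanSpace ℝ (Fin 3)))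
    (φ : EuclideanSpace ℝ (Fin 3) → ℝ)
    (l : ℝ) (hl : l ≠ 0)
    (T : EuclideanSpace ℝ (Fin 3) → ℝ → ℝ)
    (hT : ∀ x τ, T x τ = l * φ x / Real.sqrt 2 - l * Real.exp (-(Real.sqrt 2) * τ / l))
    (𝒰 : EuclideanSpace ℝ (Fin 3) → ℝ)
    (h𝒰 : ∀ x, 𝒰 x = -φ x / Real.sqrt 2) :
    (∀ x τ, 𝒰 x + T x τ / l = -Real.exp (-(Real.sqrt 2) * τ / l)) ∧
    (∀ x ∈ Ω, ∀ τ : ℝ, ∀ v : EuclideanSpace ℝ (Fin 3), ∀ t : ℝ,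
      (𝒰 x + T x τ / l) ^ 2 * ‖v‖ ^ 2
        + ((𝒰 x + T x τ / l) ^ 2)⁻¹
          * ((l / Real.sqrt 2) * fderiv ℝ φ x v
              + Real.sqrt 2 * Real.exp (-(Real.sqrt 2) * τ / l) * t) ^ 2
      = Real.exp (-2 * Real.sqrt 2 * τ / l) * ‖v‖ ^ 2
        + 2 * (t + (l / 2) * Real.exp (Real.sqrt 2 * τ / l) * fderiv ℝ φ x v) ^ 2) := by
  have factor : ∀ x τ, 𝒰 x + T x τ / l = -exp (-√2 * τ / l) := fun x τ => by
    rw [hT, h𝒰, neg_div_sqrt_two_add_div_eq hl]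
  refine ⟨factor, fun x _ τ v t => ?_⟩
  have hsq : exp (-2 * √2 * τ / l) = exp (-√2 * τ / l) ^ 2 := by
    rw [← exp_nat_mul]
    ring_nf
  have hinv : exp (√2 * τ / l) = (exp (-√2 * τ / l))⁻¹ := by
    rw [← exp_neg]
    ring_nf
  rw [factor, neg_sq, hsq, hinv, inv_sq_mul_sq_eq_two_mul_sq (exp_ne_zero _)]

/-- The coordinate change `T = lφ/√2 − l·e^{−√2τ/l}`, `𝒰 = −φ/√2` puts the
metric `e^{−2√2τ/l}(dx²+dy²+dz²) + 2(dτ + (l/2)e^{√2τ/l}dφ)²` into the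
Euclidean Kastor–Traschen form `(𝒰 + T/l)²(dx²+dy²+dz²) + (𝒰 + T/l)^{−2}dT²`. -/
theorem kastor_traschen_coordinate_change
    (Ω : Set (EuclideanSpace ℝ (Fin 3))) (hΩ : IsOpen Ω)
    (φ : EuclideanSpace ℝ (Fin 3) → ℝ) (hφ : ContDiffOn ℝ 1 φ Ω)
    (l : ℝ) (hl : l ≠ 0)
    (T : EuclideanSpace ℝ (Fin 3) → ℝ → ℝ)
    (hT : ∀ x τ, T x τ = l * φ x / Real.sqrt 2 - l * Real.exp (-(Real.sqrt 2) * τ / l))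
    (𝒰 : EuclideanSpace ℝ (Fin 3) → ℝ)
    (h𝒰 : ∀ x, 𝒰 x = -φ x / Real.sqrt 2) :
    (∀ x τ, 𝒰 x + T x τ / l = -Real.exp (-(Real.sqrt 2) * τ / l)) ∧
    (∀ x ∈ Ω, ∀ τ : ℝ, ∀ v : EuclideanSpace ℝ (Fin 3), ∀ t : ℝ,
      (𝒰 x + T x τ / l) ^ 2 * ‖v‖ ^ 2
        + ((𝒰 x + T x τ / l) ^ 2)⁻¹
          * ((l / Real.sqrt 2) * fderiv ℝ φ x v
              + Real.sqrt 2 * Real.exp (-(Real.sqrt 2) * τ / l) * t) ^ 2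
      = Real.exp (-2 * Real.sqrt 2 * τ / l) * ‖v‖ ^ 2
        + 2 * (t + (l / 2) * Real.exp (Real.sqrt 2 * τ / l) * fderiv ℝ φ x v) ^ 2) :=
  kastor_traschen_coordinate_change_general Ω φ l hl T hT 𝒰 h𝒰
end
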